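/- arXiv:2603.13583 — 5 statements merged into one kernel-verified Lean document; each statement's English description precedes it below -/
import Mathlib

section
/- Let X ~ N(Δ, σ₁²) and Y ~ N(Δ, σ₂²) be independent, and let W = (τ₁X + τ₂Y)/(τ₁+τ₂) with τᵢ = 1/σᵢ². Conditional on the event {l < X < u} (for constants l < u with ℙ(l < X < u) > 0), the random variable W has probability density f(w) = (1/σ₁₂)·φ((w−Δ)/σ₁₂)·[Φ((u−w)/((σ₁/σ₂)σ₁₂)) − Φ((l−w)/((σ₁/σ₂)σ₁₂))] / [Φ((u−Δ)/σ₁) − Φ((l−Δ)/σ₁)], where σ₁₂² = σ₁²σ₂²/(σ₁²+σ₂²). -/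
open MeasureTheory ProbabilityTheory

noncomputable def phi (t : ℝ) : ℝ := (Real.sqrt (2 * Real.pi))⁻¹ * Real.exp (-(t ^ 2) / 2)

noncomputable def Phi (t : ℝ) : ℝ := ∫ x in Set.Iic t, phi x

/-!
Restricted to `{X ∈ (l, u)}`, the independent pair `(X, Y)` still has a product law, so the
precision-weighted mean `W = (σ₂² X + σ₁² Y) / (σ₁² + σ₂²)` has density
`w ↦ ∫ₗᵘ p_X(x) p_{W ∣ X = x}(w) dx`, where `W` given `X = x` is Gaussian. Completing the square
rewrites the integrand as `p_W(w) p_{X ∣ W = w}(x)` with `W ~ N(Δ, σ₁₂²)` and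
`X ∣ W = w ~ N(w, (σ₁/σ₂)² σ₁₂²)`, so the integral is `p_W(w) ℙ(l < X < u ∣ W = w)`; dividing by
`ℙ(l < X < u)` gives the conditional density.
-/

open Real Set
open scoped NNReal ENNReal

lemma phi_nonneg (t : ℝ) : 0 ≤ phi t := by
  unfold phi
  positivity

lemma gaussianPDFReal_sq_toNNReal_eq_phi {s : ℝ} (hs : 0 < s) (m x : ℝ) :
    gaussianPDFReal m (s ^ 2).toNNReal x = s⁻¹ * phi ((x - m) / s) := by
  rw [gaussianPDFReal, phi, Real.coe_toNNReal _ (sq_nonneg s), mul_comm (2 * π),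
    Real.sqrt_mul (sq_nonneg s), Real.sqrt_sq hs.le, div_pow, mul_inv]
  field_simp

lemma gaussianReal_Ioo_eq_Phi_sub_Phi {s : ℝ} (hs : 0 < s) (m : ℝ) {a b : ℝ} (hab : a ≤ b) :
    gaussianReal m (s ^ 2).toNNReal (Ioo a b) =
      ENNReal.ofReal (Phi ((b - m) / s) - Phi ((a - m) / s)) := by
  have hphi : Integrable phi := by
    convert integrable_gaussianPDFReal 0 1 using 1
    funext x
    simp [gaussianPDFReal, phi]
  rw [gaussianReal_apply_eq_integral _ (by positivity), Phi, Phi,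
    intervalIntegral.integral_Iic_sub_Iic hphi.integrableOn hphi.integrableOn,
    ← integral_Ioc_eq_integral_Ioo, ← intervalIntegral.integral_of_le hab]
  simp_rw [gaussianPDFReal_sq_toNNReal_eq_phi hs, intervalIntegral.integral_const_mul, sub_div]
  rw [intervalIntegral.integral_comp_div_sub (fun x => phi x) hs.ne', smul_eq_mul,
    inv_mul_cancel_left₀ hs.ne']

lemma gaussianPDFReal_mul_gaussianPDFReal_weightedMean {v₁ v₂ : ℝ≥0} (h₁ : v₁ ≠ 0)
    (h₂ : v₂ ≠ 0) (m x w : ℝ) :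
    gaussianPDFReal m v₁ x *
        gaussianPDFReal ((v₂ * x + v₁ * m) / (v₁ + v₂)) ((v₁ / (v₁ + v₂)) ^ 2 * v₂) w =
      gaussianPDFReal m (v₁ * v₂ / (v₁ + v₂)) w * gaussianPDFReal w (v₁ ^ 2 / (v₁ + v₂)) x := by
  have hv₁ : (0 : ℝ) < v₁ := by positivity
  have hv₂ : (0 : ℝ) < v₂ := by positivity
  simp only [gaussianPDFReal]
  push_cast
  rw [mul_mul_mul_comm, ← mul_inv, ← sqrt_mul (by positivity), ← exp_add]
  conv_rhs => rw [mul_mul_mul_comm, ← mul_inv, ← sqrt_mul (by positivity), ← exp_add]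
  congr 1
  · congr 2
    field_simp
  · congr 1
    field_simp
    ring

lemma map_prod_withDensity_eq_withDensity_lintegral {α β γ : Type*} [MeasurableSpace α]
    [MeasurableSpace β] [MeasurableSpace γ] {ρ : Measure α} [SFinite ρ] {ν : Measure β}
    [SFinite ν] {η : Measure γ} [SFinite η] {p : α → ℝ≥0∞} {q : α → γ → ℝ≥0∞}
    {f : α → β → γ} (hp : Measurable p) (hq : Measurable (Function.uncurry q))
    (hf : Measurable (Function.uncurry f)) (hfq : ∀ x, ν.map (f x) = η.withDensity (q x)) :
    ((ρ.withDensity p).prod ν).map (Function.uncurry f) =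
      η.withDensity fun z => ∫⁻ x, p x * q x z ∂ρ := by
  ext s hs
  have hsection (x : α) :
      ν (Prod.mk x ⁻¹' (Function.uncurry f ⁻¹' s)) = ∫⁻ z in s, q x z ∂η := by
    rw [← withDensity_apply _ hs, ← hfq,
      Measure.map_apply (f := f x) (hf.comp measurable_prodMk_left) hs]
    rfl
  rw [Measure.map_apply hf hs, Measure.prod_apply (hf hs),
    lintegral_withDensity_eq_lintegral_mul _ hp (measurable_measure_prodMk_left (hf hs)),
    withDensity_apply _ hs]
  simp_rw [Pi.mul_apply, hsection]
  calc ∫⁻ x, p x * ∫⁻ z in s, q x z ∂η ∂ρ = ∫⁻ x, ∫⁻ z in s, p x * q x z ∂η ∂ρ := by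
        refine lintegral_congr fun x => (lintegral_const_mul _ ?_).symm
        exact hq.comp measurable_prodMk_left
    _ = ∫⁻ z in s, ∫⁻ x, p x * q x z ∂ρ ∂η :=
        lintegral_lintegral_swap ((hp.comp measurable_fst).mul hq).aemeasurable

lemma ProbabilityTheory.IndepFun.map_prodMk_restrict_preimage {Ω β γ : Type*}
    [MeasurableSpace Ω] [MeasurableSpace β] [MeasurableSpace γ] {μ : Measure Ω}
    [IsFiniteMeasure μ] {X : Ω → β} {Y : Ω → γ} (hXY : IndepFun X Y μ) (hX : Measurable X)
    (hY : Measurable Y) {A : Set β} (hA : MeasurableSet A) :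
    (μ.restrict (X ⁻¹' A)).map (fun ω => (X ω, Y ω)) = ((μ.map X).restrict A).prod (μ.map Y) := by
  have hpre : X ⁻¹' A = (fun ω => (X ω, Y ω)) ⁻¹' (A ×ˢ univ) := by ext; simp
  rw [hpre, ← Measure.restrict_map (hX.prodMk hY) (hA.prod .univ),
    (indepFun_iff_map_prod_eq_prod_map_map hX.aemeasurable hY.aemeasurable).mp hXY,
    ← Measure.prod_restrict, Measure.restrict_univ]

lemma gaussianReal_map_const_add_const_mul {m : ℝ} {v : ℝ≥0} (a c : ℝ) :
    (gaussianReal m v).map (fun y => a + c * y) =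
      gaussianReal (a + c * m) (.mk (c ^ 2) (sq_nonneg _) * v) := by
  have hcomp : (fun y => a + c * y) = (a + ·) ∘ (c * ·) := rfl
  rw [hcomp, ← Measure.map_map (by fun_prop) (by fun_prop), gaussianReal_map_const_mul,
    gaussianReal_map_const_add, add_comm]

lemma map_restrict_weightedMean_eq_withDensity {Ω : Type*} [MeasurableSpace Ω]
    {μ : Measure Ω} [IsFiniteMeasure μ] {X Y : Ω → ℝ} (hXY : IndepFun X Y μ)
    (hX : Measurable X) (hY : Measurable Y) {m : ℝ} {v₁ v₂ : ℝ≥0} (h₁ : v₁ ≠ 0) (h₂ : v₂ ≠ 0)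
    (hlawX : μ.map X = gaussianReal m v₁) (hlawY : μ.map Y = gaussianReal m v₂) {A : Set ℝ}
    (hA : MeasurableSet A) :
    (μ.restrict (X ⁻¹' A)).map (fun ω => (v₂ * X ω + v₁ * Y ω) / (v₁ + v₂)) =
      volume.withDensity fun w =>
        gaussianPDF m (v₁ * v₂ / (v₁ + v₂)) w * gaussianReal w (v₁ ^ 2 / (v₁ + v₂)) A := by
  set f : ℝ → ℝ → ℝ := fun x y => (v₂ * x + v₁ * y) / (v₁ + v₂) with hf_def
  have hf : Measurable (Function.uncurry f) := by fun_prop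
  have hsection (x : ℝ) : (gaussianReal m v₂).map (f x) =
      volume.withDensity
        (gaussianPDF ((v₂ * x + v₁ * m) / (v₁ + v₂)) ((v₁ / (v₁ + v₂)) ^ 2 * v₂)) := by
    have hv : (v₁ / (v₁ + v₂)) ^ 2 * v₂ ≠ 0 := by positivity
    have hfx : f x = fun y => v₂ * x / (v₁ + v₂) + v₁ / (v₁ + v₂) * y := by
      funext y
      simp only [hf_def]
      ring
    rw [← gaussianReal_of_var_ne_zero _ hv, hfx, gaussianReal_map_const_add_const_mul]
    congr 1
    ring
  have hq : Measurable (Function.uncurry fun x w =>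
      gaussianPDF ((v₂ * x + v₁ * m) / (v₁ + v₂)) ((v₁ / (v₁ + v₂)) ^ 2 * v₂) w) := by
    simp only [gaussianPDF, gaussianPDFReal]
    fun_prop
  rw [show (fun ω => (v₂ * X ω + v₁ * Y ω) / (v₁ + v₂)) =
      Function.uncurry f ∘ fun ω => (X ω, Y ω) from rfl, ← Measure.map_map hf (hX.prodMk hY),
    hXY.map_prodMk_restrict_preimage hX hY hA, hlawX, hlawY, gaussianReal_of_var_ne_zero _ h₁,
    restrict_withDensity hA,
    map_prod_withDensity_eq_withDensity_lintegral (measurable_gaussianPDF _ _) hq hf hsection]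
  congr 1
  funext w
  have hfactor (x : ℝ) : gaussianPDF m v₁ x *
      gaussianPDF ((v₂ * x + v₁ * m) / (v₁ + v₂)) ((v₁ / (v₁ + v₂)) ^ 2 * v₂) w =
      gaussianPDF m (v₁ * v₂ / (v₁ + v₂)) w * gaussianPDF w (v₁ ^ 2 / (v₁ + v₂)) x := by
    simp only [gaussianPDF]
    rw [← ENNReal.ofReal_mul (gaussianPDFReal_nonneg _ _ _),
      ← ENNReal.ofReal_mul (gaussianPDFReal_nonneg _ _ _),
      gaussianPDFReal_mul_gaussianPDFReal_weightedMean h₁ h₂]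
  simp_rw [hfactor]
  rw [lintegral_const_mul _ (measurable_gaussianPDF _ _), gaussianReal_apply _ (by positivity)]

lemma toNNReal_sq_mul_div_add {σ₁ σ₂ : ℝ} :
    (σ₁ ^ 2).toNNReal * (σ₂ ^ 2).toNNReal / ((σ₁ ^ 2).toNNReal + (σ₂ ^ 2).toNNReal) =
      ((σ₁ * σ₂ / √(σ₁ ^ 2 + σ₂ ^ 2)) ^ 2).toNNReal := by
  ext
  push_cast
  simp only [Real.coe_toNNReal _ (sq_nonneg _)]
  simp only [div_pow, mul_pow, Real.sq_sqrt (add_nonneg (sq_nonneg σ₁) (sq_nonneg σ₂))]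

lemma toNNReal_sq_sq_div_add {σ₁ σ₂ : ℝ} (h₂ : σ₂ ≠ 0) :
    (σ₁ ^ 2).toNNReal ^ 2 / ((σ₁ ^ 2).toNNReal + (σ₂ ^ 2).toNNReal) =
      ((σ₁ / σ₂ * (σ₁ * σ₂ / √(σ₁ ^ 2 + σ₂ ^ 2))) ^ 2).toNNReal := by
  ext
  push_cast
  simp only [Real.coe_toNNReal _ (sq_nonneg _)]
  simp only [div_pow, mul_pow, Real.sq_sqrt (add_nonneg (sq_nonneg σ₁) (sq_nonneg σ₂))]
  field_simp

theorem stmt_1 {Ω : Type*} [MeasurableSpace Ω] (μ : Measure Ω) [IsProbabilityMeasure μ]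
    (X Y : Ω → ℝ) (hX : Measurable X) (hY : Measurable Y)
    (hindep : IndepFun X Y μ)
    (σ1 σ2 Δ l u τ1 τ2 σ12 : ℝ) (hσ1 : 0 < σ1) (hσ2 : 0 < σ2) (hlu : l < u)
    (hτ1 : τ1 = 1 / σ1 ^ 2) (hτ2 : τ2 = 1 / σ2 ^ 2)
    (hσ12 : σ12 = σ1 * σ2 / Real.sqrt (σ1 ^ 2 + σ2 ^ 2))
    (hlawX : Measure.map X μ = gaussianReal Δ (Real.toNNReal (σ1 ^ 2)))
    (hlawY : Measure.map Y μ = gaussianReal Δ (Real.toNNReal (σ2 ^ 2)))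
    (E : Set Ω) (hE : E = {ω | l < X ω ∧ X ω < u}) (hEpos : 0 < μ E) :
    Measure.map (fun ω => (τ1 * X ω + τ2 * Y ω) / (τ1 + τ2)) (μ[|E]) =
      volume.withDensity (fun w => ENNReal.ofReal
        ((1 / σ12) * phi ((w - Δ) / σ12) *
          (Phi ((u - w) / ((σ1 / σ2) * σ12)) - Phi ((l - w) / ((σ1 / σ2) * σ12))) /
          (Phi ((u - Δ) / σ1) - Phi ((l - Δ) / σ1)))) := by
  subst hτ1 hτ2 hσ12 hE
  have hW : (fun ω => (1 / σ1 ^ 2 * X ω + 1 / σ2 ^ 2 * Y ω) / (1 / σ1 ^ 2 + 1 / σ2 ^ 2)) =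
      fun ω => ((σ2 ^ 2).toNNReal * X ω + (σ1 ^ 2).toNNReal * Y ω) /
        ((σ1 ^ 2).toNNReal + (σ2 ^ 2).toNNReal : ℝ) := by
    funext ω
    simp only [Real.coe_toNNReal _ (sq_nonneg _)]
    field_simp
    ring
  have hE : {ω | l < X ω ∧ X ω < u} = X ⁻¹' Ioo l u := rfl
  have hμE : μ (X ⁻¹' Ioo l u) = ENNReal.ofReal (Phi ((u - Δ) / σ1) - Phi ((l - Δ) / σ1)) := by
    rw [← Measure.map_apply hX measurableSet_Ioo, hlawX,
      gaussianReal_Ioo_eq_Phi_sub_Phi hσ1 _ hlu.le]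
  have hZ : 0 < Phi ((u - Δ) / σ1) - Phi ((l - Δ) / σ1) := by
    rwa [hE, hμE, ENNReal.ofReal_pos] at hEpos
  rw [hW, hE, ProbabilityTheory.cond, Measure.map_smul,
    map_restrict_weightedMean_eq_withDensity hindep hX hY (by positivity) (by positivity) hlawX
      hlawY measurableSet_Ioo, hμE, toNNReal_sq_mul_div_add, toNNReal_sq_sq_div_add hσ2.ne',
    ← withDensity_smul' _ _ (by simpa using hZ)]
  congr 1
  funext w
  rw [Pi.smul_apply, smul_eq_mul, gaussianPDF, gaussianPDFReal_sq_toNNReal_eq_phi (by positivity),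
    gaussianReal_Ioo_eq_Phi_sub_Phi (by positivity) _ hlu.le, ENNReal.ofReal_div_of_pos hZ,
    ← ENNReal.ofReal_mul (mul_nonneg (by positivity) (phi_nonneg _)), ENNReal.div_eq_inv_mul,
    one_div]
end

section
/- The function f(w) = (1/σ₁₂)·φ((w−Δ)/σ₁₂)·[Φ((u−w)/(ρσ₁₂)) − Φ((l−w)/(ρσ₁₂))] / [Φ((u−Δ)/σ₁) − Φ((l−Δ)/σ₁)], for fixed constants l < u, σ₁₂ > 0, ρ = σ₁/σ₂ > 0, σ₁ > 0, is a probability density on ℝ, i.e., f is nonnegative and integrates to 1 over ℝ. -/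
/-!
In terms of Gaussian densities `g(μ, v)`, the numerator of `f` is
`g(Δ, σ₁₂²)(w) · ∫_{(l,u]} g(w, ρ²σ₁₂²)`, and the denominator is `∫_{(l,u]} g(Δ, σ₁²)`.
The product `g(μ, v)(x) · g(x, w)(y)` factors as a Gaussian density in `x` times `g(μ, v + w)(y)`,
so integrating out `x` convolves the two variances; since `σ₁₂² + ρ²σ₁₂² = σ₁²`, integrating the
numerator over `w` gives exactly the denominator.
-/

open MeasureTheory

open Real ProbabilityTheory
open scoped NNReal

lemma gaussianPDFReal_mul_gaussianPDFReal (μ x y : ℝ) {v w : ℝ≥0} (hv : v ≠ 0) (hw : w ≠ 0) :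
    gaussianPDFReal μ v x * gaussianPDFReal x w y
      = gaussianPDFReal ((w * μ + v * y) / (v + w)) (v * w / (v + w)) x
        * gaussianPDFReal μ (v + w) y := by
  have hv' : (0 : ℝ) < v := NNReal.coe_pos.mpr (pos_iff_ne_zero.mpr hv)
  have hw' : (0 : ℝ) < w := NNReal.coe_pos.mpr (pos_iff_ne_zero.mpr hw)
  simp only [gaussianPDFReal, NNReal.coe_add, NNReal.coe_mul, NNReal.coe_div]
  have hmul : ∀ a b c d : ℝ, 0 ≤ a → 0 ≤ b →
      (√a)⁻¹ * exp c * ((√b)⁻¹ * exp d) = (√(a * b))⁻¹ * exp (c + d) := by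
    intro a b c d ha hb
    rw [Real.sqrt_mul ha, mul_inv, Real.exp_add]
    ring
  rw [hmul _ _ _ _ (by positivity) (by positivity), hmul _ _ _ _ (by positivity) (by positivity)]
  congr 2
  · field_simp
  · field_simp
    ring

lemma lintegral_gaussianPDFReal_mul_gaussianPDFReal (μ y : ℝ) {v w : ℝ≥0} (hv : v ≠ 0)
    (hw : w ≠ 0) :
    ∫⁻ x, ENNReal.ofReal (gaussianPDFReal μ v x * gaussianPDFReal x w y)
      = ENNReal.ofReal (gaussianPDFReal μ (v + w) y) := by
  have hvw : v * w / (v + w) ≠ 0 := by positivity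
  simp_rw [gaussianPDFReal_mul_gaussianPDFReal μ _ y hv hw,
    ENNReal.ofReal_mul (gaussianPDFReal_nonneg _ _ _)]
  rw [lintegral_mul_const' _ _ ENNReal.ofReal_ne_top, lintegral_gaussianPDFReal_eq_one _ hvw,
    one_mul]

lemma integral_gaussianPDFReal_mul_setIntegral (μ : ℝ) {v w : ℝ≥0} (hv : v ≠ 0) (hw : w ≠ 0)
    (s : Set ℝ) :
    ∫ x, gaussianPDFReal μ v x * ∫ y in s, gaussianPDFReal x w y
      = ∫ y in s, gaussianPDFReal μ (v + w) y := by
  have hinner : StronglyMeasurable fun x ↦ ∫ y in s, gaussianPDFReal x w y :=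
    StronglyMeasurable.integral_prod_right' (f := fun p : ℝ × ℝ ↦ gaussianPDFReal p.1 w p.2)
      (by fun_prop)
  rw [integral_eq_lintegral_of_nonneg_ae
      (ae_of_all _ fun x ↦ mul_nonneg (gaussianPDFReal_nonneg _ _ _)
        (setIntegral_nonneg_of_ae (ae_of_all _ (gaussianPDFReal_nonneg _ _))))
      ((stronglyMeasurable_gaussianPDFReal μ v).mul hinner).aestronglyMeasurable,
    integral_eq_lintegral_of_nonneg_ae (ae_of_all _ (gaussianPDFReal_nonneg _ _))
      (stronglyMeasurable_gaussianPDFReal _ _).aestronglyMeasurable]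
  congr 1
  calc ∫⁻ x, ENNReal.ofReal (gaussianPDFReal μ v x * ∫ y in s, gaussianPDFReal x w y)
      = ∫⁻ x, ∫⁻ y in s, ENNReal.ofReal (gaussianPDFReal μ v x * gaussianPDFReal x w y) := by
        refine lintegral_congr fun x ↦ ?_
        rw [← integral_const_mul]
        exact ofReal_integral_eq_lintegral_ofReal
          ((integrable_gaussianPDFReal x w).restrict.const_mul _)
          (ae_of_all _ fun y ↦ mul_nonneg (gaussianPDFReal_nonneg _ _ _)
            (gaussianPDFReal_nonneg _ _ _))
    _ = ∫⁻ y in s, ∫⁻ x, ENNReal.ofReal (gaussianPDFReal μ v x * gaussianPDFReal x w y) :=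
        lintegral_lintegral_swap (by fun_prop)
    _ = ∫⁻ y in s, ENNReal.ofReal (gaussianPDFReal μ (v + w) y) := by
        simp_rw [lintegral_gaussianPDFReal_mul_gaussianPDFReal μ _ hv hw]

lemma gaussianPDFReal_sq_toNNReal {σ : ℝ} (hσ : 0 < σ) (μ x : ℝ) :
    gaussianPDFReal μ (σ ^ 2).toNNReal x = σ⁻¹ * phi ((x - μ) / σ) := by
  rw [gaussianPDFReal, phi, Real.coe_toNNReal _ (sq_nonneg σ), Real.sqrt_mul (by positivity),
    Real.sqrt_sq hσ.le, mul_inv]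
  field_simp

lemma phi_eq_gaussianPDFReal : phi = gaussianPDFReal 0 1 := by
  ext x
  simpa using (gaussianPDFReal_sq_toNNReal one_pos 0 x).symm

lemma Phi_sub_Phi_div_eq_setIntegral {s : ℝ} (hs : 0 < s) (w : ℝ) {l u : ℝ} (hlu : l ≤ u) :
    Phi ((u - w) / s) - Phi ((l - w) / s)
      = ∫ y in Set.Ioc l u, gaussianPDFReal w (s ^ 2).toNNReal y := by
  have hphi : Integrable phi := phi_eq_gaussianPDFReal ▸ integrable_gaussianPDFReal 0 1
  simp_rw [Phi, intervalIntegral.integral_Iic_sub_Iic hphi.integrableOn hphi.integrableOn,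
    ← intervalIntegral.integral_of_le hlu, gaussianPDFReal_sq_toNNReal hs,
    intervalIntegral.integral_const_mul]
  rw [intervalIntegral.integral_comp_sub_right (fun x ↦ phi (x / s)) w,
    intervalIntegral.integral_comp_div phi hs.ne', smul_eq_mul, inv_mul_cancel_left₀ hs.ne']

lemma setIntegral_Ioc_gaussianPDFReal_pos (μ : ℝ) {v : ℝ≥0} (hv : v ≠ 0) {l u : ℝ} (hlu : l < u) :
    0 < ∫ y in Set.Ioc l u, gaussianPDFReal μ v y := by
  rw [← intervalIntegral.integral_of_le hlu.le]
  exact intervalIntegral.intervalIntegral_pos_of_pos_on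
    (integrable_gaussianPDFReal μ v).intervalIntegrable
    (fun y _ ↦ gaussianPDFReal_pos μ v y hv) hlu

theorem stmt_2 (σ1 σ2 σ12 ρ Δ l u : ℝ) (hσ1 : 0 < σ1) (hσ2 : 0 < σ2)
    (hσ12 : σ12 = σ1 * σ2 / Real.sqrt (σ1 ^ 2 + σ2 ^ 2))
    (hρ : ρ = σ1 / σ2) (hlu : l < u)
    (f : ℝ → ℝ)
    (hf : ∀ w, f w = (1 / σ12) * phi ((w - Δ) / σ12) *
        (Phi ((u - w) / (ρ * σ12)) - Phi ((l - w) / (ρ * σ12))) /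
        (Phi ((u - Δ) / σ1) - Phi ((l - Δ) / σ1))) :
    (∀ w, 0 ≤ f w) ∧ (∫ w, f w) = 1 := by
  have hσ12_pos : 0 < σ12 := by rw [hσ12]; positivity
  have hρσ12_pos : 0 < ρ * σ12 := by rw [hρ]; positivity
  have hvar : σ12 ^ 2 + (ρ * σ12) ^ 2 = σ1 ^ 2 := by
    have hs : Real.sqrt (σ1 ^ 2 + σ2 ^ 2) ^ 2 = σ1 ^ 2 + σ2 ^ 2 := Real.sq_sqrt (by positivity)
    rw [hσ12, hρ]
    field_simp
    rw [hs]
    ring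
  have hf_eq : f = fun w ↦ gaussianPDFReal Δ (σ12 ^ 2).toNNReal w
      * (∫ y in Set.Ioc l u, gaussianPDFReal w ((ρ * σ12) ^ 2).toNNReal y)
      / ∫ y in Set.Ioc l u, gaussianPDFReal Δ (σ1 ^ 2).toNNReal y := by
    ext w
    rw [hf, one_div, ← gaussianPDFReal_sq_toNNReal hσ12_pos,
      Phi_sub_Phi_div_eq_setIntegral hσ1 _ hlu.le,
      Phi_sub_Phi_div_eq_setIntegral hρσ12_pos _ hlu.le]
  have hZ_pos := setIntegral_Ioc_gaussianPDFReal_pos Δ (by positivity : (σ1 ^ 2).toNNReal ≠ 0) hlu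
  refine ⟨fun w ↦ ?_, ?_⟩
  · rw [hf_eq]
    exact div_nonneg (mul_nonneg (gaussianPDFReal_nonneg _ _ _)
      (setIntegral_nonneg measurableSet_Ioc fun y _ ↦ gaussianPDFReal_nonneg _ _ _)) hZ_pos.le
  · rw [hf_eq, integral_div, integral_gaussianPDFReal_mul_setIntegral _ (by positivity)
      (by positivity), ← Real.toNNReal_add (sq_nonneg _) (sq_nonneg _), hvar,
      div_self hZ_pos.ne']
end

section
/- Let X have the N(Δ, σ₁²) distribution truncated to (l, u), let Y ~ N(Δ, σ₂²) independent of X, and let W = (τ₁X + τ₂Y)/(τ₁+τ₂) with τᵢ = 1/σᵢ². Then E[W] = Δ + (σ₁τ₁/(τ₁+τ₂))·(φ((l−Δ)/σ₁) − φ((u−Δ)/σ₁))/(Φ((u−Δ)/σ₁) − Φ((l−Δ)/σ₁)). -/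
/-!
By linearity, `E[W] = (τ₁ E[X] + τ₂ E[Y]) / (τ₁ + τ₂)` with `E[Y] = Δ`. Since `φ'(t) = -t φ(t)`,
the function `Δ Φ((x - Δ)/σ) - σ φ((x - Δ)/σ)` is an antiderivative of `x φ((x - Δ)/σ) / σ`,
which gives the mean `Δ + σ (φ(l') - φ(u')) / (Φ(u') - Φ(l'))` of the truncated normal
distribution, where `l' = (l - Δ)/σ` and `u' = (u - Δ)/σ`.
-/

open MeasureTheory ProbabilityTheory

lemma phi_pos (t : ℝ) : 0 < phi t := by
  unfold phi; positivity

lemma continuous_phi : Continuous phi := by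
  unfold phi; fun_prop

lemma integrable_phi : Integrable phi := by
  refine ((integrable_exp_neg_mul_sq (b := 2⁻¹) (by norm_num)).const_mul
    (Real.sqrt (2 * Real.pi))⁻¹).congr (Filter.Eventually.of_forall fun x => ?_)
  simp only [phi]
  ring_nf

lemma hasDerivAt_phi (t : ℝ) : HasDerivAt phi (-t * phi t) t :=
  (((hasDerivAt_pow 2 t).neg.div_const 2).exp.const_mul _).congr_deriv
    (by unfold phi; simp only [Pi.neg_apply]; ring)

lemma Phi_sub_Phi (a b : ℝ) : Phi b - Phi a = ∫ x in a..b, phi x :=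
  intervalIntegral.integral_Iic_sub_Iic integrable_phi.integrableOn integrable_phi.integrableOn

lemma Phi_sub_Phi_pos {a b : ℝ} (hab : a < b) : 0 < Phi b - Phi a := by
  rw [Phi_sub_Phi]
  exact intervalIntegral.intervalIntegral_pos_of_pos integrable_phi.intervalIntegrable phi_pos hab

lemma Phi_affine_sub_Phi_affine_pos {σ Δ l u : ℝ} (hσ : 0 < σ) (hlu : l < u) :
    0 < Phi ((u - Δ) / σ) - Phi ((l - Δ) / σ) :=
  Phi_sub_Phi_pos (div_lt_div_of_pos_right (sub_lt_sub_right hlu Δ) hσ)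

lemma hasDerivAt_Phi (t : ℝ) : HasDerivAt Phi (phi t) t := by
  have h := (intervalIntegral.integral_hasDerivAt_right (a := 0) (b := t)
    integrable_phi.intervalIntegrable (continuous_phi.stronglyMeasurableAtFilter _ _)
    continuous_phi.continuousAt).const_add (Phi 0)
  refine h.congr_of_eventuallyEq (Filter.Eventually.of_forall fun s => ?_)
  simp only [← Phi_sub_Phi]
  ring

lemma intervalIntegral_phi_affine_mul {σ : ℝ} (hσ : σ ≠ 0) (Δ l u : ℝ) :
    ∫ x in l..u, (1 / σ) * phi ((x - Δ) / σ) * x =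
      Δ * (Phi ((u - Δ) / σ) - Phi ((l - Δ) / σ)) +
        σ * (phi ((l - Δ) / σ) - phi ((u - Δ) / σ)) := by
  have hF : ∀ x : ℝ, HasDerivAt (fun x => Δ * Phi ((x - Δ) / σ) - σ * phi ((x - Δ) / σ))
      ((1 / σ) * phi ((x - Δ) / σ) * x) x := fun x => by
    have hin : HasDerivAt (fun x : ℝ => (x - Δ) / σ) (1 / σ) x := by
      simpa [one_div] using ((hasDerivAt_id x).sub_const Δ).div_const σ
    refine ((((hasDerivAt_Phi _).comp x hin).const_mul Δ).sub
      (((hasDerivAt_phi _).comp x hin).const_mul σ)).congr_deriv ?_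
    field_simp
    ring
  rw [intervalIntegral.integral_eq_sub_of_hasDerivAt (fun x _ => hF x)
    ((by have := continuous_phi; fun_prop : Continuous _).intervalIntegrable _ _)]
  ring

section WithDensityOfReal

variable {α : Type*} [MeasurableSpace α] {μ : Measure α} {f : α → ℝ}

lemma integral_withDensity_ofReal (hf : Measurable f) (hf0 : 0 ≤ f) (g : α → ℝ) :
    ∫ x, g x ∂μ.withDensity (fun x => ENNReal.ofReal (f x)) = ∫ x, f x * g x ∂μ := by
  rw [integral_withDensity_eq_integral_toReal_smul hf.ennreal_ofReal
    (Filter.Eventually.of_forall fun _ => ENNReal.ofReal_lt_top)]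
  simp only [ENNReal.toReal_ofReal (hf0 _), smul_eq_mul]

lemma integrable_withDensity_ofReal_iff (hf : Measurable f) (hf0 : 0 ≤ f) {g : α → ℝ} :
    Integrable g (μ.withDensity (fun x => ENNReal.ofReal (f x))) ↔
      Integrable (fun x => f x * g x) μ := by
  rw [integrable_withDensity_iff hf.ennreal_ofReal
    (Filter.Eventually.of_forall fun _ => ENNReal.ofReal_lt_top)]
  simp only [ENNReal.toReal_ofReal (hf0 _), mul_comm]

end WithDensityOfReal

lemma ProbabilityTheory.HasLaw.integrable {Ω E : Type*} [MeasurableSpace Ω]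
    [NormedAddCommGroup E] [MeasurableSpace E] [OpensMeasurableSpace E] [SecondCountableTopology E]
    {P : Measure Ω} {μ : Measure E} {X : Ω → E}
    (hX : HasLaw X μ P) (h : Integrable id μ) : Integrable X P := by
  rw [← hX.map_eq] at h
  exact (integrable_map_measure aestronglyMeasurable_id hX.aemeasurable).mp h

section TruncNormal

noncomputable def truncNormalDensity (Δ σ l u : ℝ) : ℝ → ℝ :=
  Set.indicator (Set.Ioo l u)
    fun x => (1 / σ) * phi ((x - Δ) / σ) / (Phi ((u - Δ) / σ) - Phi ((l - Δ) / σ))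

noncomputable def truncNormal (Δ σ l u : ℝ) : Measure ℝ :=
  volume.withDensity fun x => ENNReal.ofReal (truncNormalDensity Δ σ l u x)

variable {Δ σ l u : ℝ}

lemma measurable_truncNormalDensity : Measurable (truncNormalDensity Δ σ l u) :=
  (by have := continuous_phi; fun_prop : Continuous _).measurable.indicator measurableSet_Ioo

lemma truncNormalDensity_nonneg (hσ : 0 < σ) (hlu : l < u) :
    0 ≤ truncNormalDensity Δ σ l u := by
  have := Phi_affine_sub_Phi_affine_pos (Δ := Δ) hσ hlu
  exact Set.indicator_nonneg fun x _ => by have := phi_pos ((x - Δ) / σ); positivity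

lemma integrable_id_truncNormal (hσ : 0 < σ) (hlu : l < u) :
    Integrable id (truncNormal Δ σ l u) := by
  rw [truncNormal, integrable_withDensity_ofReal_iff measurable_truncNormalDensity
    (truncNormalDensity_nonneg hσ hlu)]
  simp_rw [truncNormalDensity, id, ← Set.indicator_mul_left (Set.Ioo l u) _ (fun x : ℝ => x)]
  rw [integrable_indicator_iff measurableSet_Ioo]
  exact (by have := continuous_phi; fun_prop : Continuous _).integrableOn_Icc.mono_set
    Set.Ioo_subset_Icc_self

lemma integral_id_truncNormal (hσ : 0 < σ) (hlu : l < u) :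
    ∫ x, x ∂truncNormal Δ σ l u = Δ + σ * ((phi ((l - Δ) / σ) - phi ((u - Δ) / σ)) /
      (Phi ((u - Δ) / σ) - Phi ((l - Δ) / σ))) := by
  have hZ := Phi_affine_sub_Phi_affine_pos (Δ := Δ) hσ hlu
  rw [truncNormal, integral_withDensity_ofReal measurable_truncNormalDensity
    (truncNormalDensity_nonneg hσ hlu)]
  simp_rw [truncNormalDensity, ← Set.indicator_mul_left (Set.Ioo l u) _ (fun x : ℝ => x)]
  rw [integral_indicator measurableSet_Ioo, ← integral_Ioc_eq_integral_Ioo,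
    ← intervalIntegral.integral_of_le hlu.le]
  simp only [div_mul_eq_mul_div _ (Phi ((u - Δ) / σ) - Phi ((l - Δ) / σ))]
  rw [intervalIntegral.integral_div, intervalIntegral_phi_affine_mul hσ.ne']
  field_simp

end TruncNormal

theorem stmt_6_general {Ω : Type*} [MeasurableSpace Ω] (μ : Measure Ω)
    (X Y : Ω → ℝ) (hX : Measurable X) (hY : Measurable Y)
    (σ1 σ2 Δ l u τ1 τ2 : ℝ) (hσ1 : 0 < σ1) (hlu : l < u)
    (hτ1 : τ1 = 1 / σ1 ^ 2) (hτ2 : τ2 = 1 / σ2 ^ 2)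
    (hlawX : Measure.map X μ = volume.withDensity (fun x => ENNReal.ofReal
      (Set.indicator (Set.Ioo l u)
        (fun x => (1 / σ1) * phi ((x - Δ) / σ1) /
          (Phi ((u - Δ) / σ1) - Phi ((l - Δ) / σ1))) x)))
    (hlawY : Measure.map Y μ = gaussianReal Δ (Real.toNNReal (σ2 ^ 2))) :
    (∫ ω, (τ1 * X ω + τ2 * Y ω) / (τ1 + τ2) ∂μ) =
      Δ + (σ1 * τ1 / (τ1 + τ2)) *
        ((phi ((l - Δ) / σ1) - phi ((u - Δ) / σ1)) /
          (Phi ((u - Δ) / σ1) - Phi ((l - Δ) / σ1))) := by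
  have hXlaw : HasLaw X (truncNormal Δ σ1 l u) μ := ⟨hX.aemeasurable, hlawX⟩
  have hYlaw : HasLaw Y (gaussianReal Δ (σ2 ^ 2).toNNReal) μ := ⟨hY.aemeasurable, hlawY⟩
  have hIX := hXlaw.integrable (integrable_id_truncNormal hσ1 hlu)
  have hIY := hYlaw.integrable (memLp_one_iff_integrable.mp (memLp_id_gaussianReal 1))
  have hτ : 0 < τ1 + τ2 := by rw [hτ1, hτ2]; positivity
  rw [integral_div, integral_add (hIX.const_mul τ1) (hIY.const_mul τ2), integral_const_mul,
    integral_const_mul, hXlaw.integral_eq, hYlaw.integral_eq, integral_id_truncNormal hσ1 hlu,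
    integral_id_gaussianReal]
  field_simp
  ring

theorem stmt_6 {Ω : Type*} [MeasurableSpace Ω] (μ : Measure Ω) [IsProbabilityMeasure μ]
    (X Y : Ω → ℝ) (hX : Measurable X) (hY : Measurable Y)
    (hindep : IndepFun X Y μ)
    (σ1 σ2 Δ l u τ1 τ2 : ℝ) (hσ1 : 0 < σ1) (hσ2 : 0 < σ2) (hlu : l < u)
    (hτ1 : τ1 = 1 / σ1 ^ 2) (hτ2 : τ2 = 1 / σ2 ^ 2)
    (hlawX : Measure.map X μ = volume.withDensity (fun x => ENNReal.ofReal
      (Set.indicator (Set.Ioo l u)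
        (fun x => (1 / σ1) * phi ((x - Δ) / σ1) /
          (Phi ((u - Δ) / σ1) - Phi ((l - Δ) / σ1))) x)))
    (hlawY : Measure.map Y μ = gaussianReal Δ (Real.toNNReal (σ2 ^ 2))) :
    (∫ ω, (τ1 * X ω + τ2 * Y ω) / (τ1 + τ2) ∂μ) =
      Δ + (σ1 * τ1 / (τ1 + τ2)) *
        ((phi ((l - Δ) / σ1) - phi ((u - Δ) / σ1)) /
          (Phi ((u - Δ) / σ1) - Phi ((l - Δ) / σ1))) :=
  stmt_6_general μ X Y hX hY σ1 σ2 Δ l u τ1 τ2 hσ1 hlu hτ1 hτ2 hlawX hlawY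
end

section
/- Let f be a continuous strictly positive probability density on ℝ with CDF F and with ∫|t|f(t)dt < ∞. Fix 0 < α < 1/2, and for c₁ with F(c₁) < α define c₂(c₁) = F⁻¹(F(c₁) + 1 − α). Then the map I(c₁) = ∫_{c₁}^{c₂(c₁)} t·f(t) dt is strictly increasing in c₁ on {c₁ : F(c₁) < α}. -/
open MeasureTheory

theorem stmt_8 (f : ℝ → ℝ) (hf_cont : Continuous f) (hf_pos : ∀ t, 0 < f t)
    (hf_density : (∫ t, f t) = 1)
    (hf_moment : Integrable (fun t => |t| * f t))
    (F Finv : ℝ → ℝ) (hF : ∀ x, F x = ∫ t in Set.Iic x, f t)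
    (hFinv_left : ∀ x, Finv (F x) = x)
    (hFinv_right : ∀ y, 0 < y → y < 1 → F (Finv y) = y)
    (α : ℝ) (hα0 : 0 < α) (hα : α < 1 / 2) :
    StrictMonoOn (fun c1 => ∫ t in c1..(Finv (F c1 + 1 - α)), t * f t)
      {c1 | F c1 < α} := by
  have hfi : Integrable f := by
    by_contra h
    rw [integral_undef h] at hf_density
    norm_num at hf_density
  have hfint : ∀ x y : ℝ, IntervalIntegrable f volume x y :=
    fun x y => hf_cont.intervalIntegrable x y
  have hgint : ∀ x y : ℝ, IntervalIntegrable (fun t => t * f t) volume x y :=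
    fun x y => (continuous_id.mul hf_cont).intervalIntegrable x y
  have hFdiff : ∀ x y : ℝ, F y - F x = ∫ t in x..y, f t := by
    intro x y
    rw [hF, hF, intervalIntegral.integral_Iic_sub_Iic hfi.integrableOn hfi.integrableOn]
  have hFmono : ∀ x y : ℝ, x < y → F x < F y := by
    intro x y hxy
    have h1 := intervalIntegral.intervalIntegral_pos_of_pos (hfint x y) hf_pos hxy
    have h2 := hFdiff x y
    linarith
  have hFpos : ∀ x : ℝ, 0 < F x := by
    intro x
    have h1 : 0 ≤ F (x - 1) := by
      rw [hF]
      exact setIntegral_nonneg measurableSet_Iic fun t _ => (hf_pos t).le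
    have := hFmono (x - 1) x (by linarith)
    linarith
  intro a ha b hb hab
  simp only [Set.mem_setOf_eq] at ha hb
  set A := Finv (F a + 1 - α) with hAdef
  set B := Finv (F b + 1 - α) with hBdef
  have hFA : F A = F a + 1 - α := hFinv_right _ (by linarith [hFpos a]) (by linarith)
  have hFB : F B = F b + 1 - α := hFinv_right _ (by linarith [hFpos b]) (by linarith)
  have hlt : ∀ x y : ℝ, F x < F y → x < y := by
    intro x y h
    by_contra hc
    push_neg at hc
    rcases eq_or_lt_of_le hc with h' | h'
    · rw [h'] at h; exact lt_irrefl _ h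
    · exact absurd (hFmono y x h') (by linarith)
  have hbA : b < A := hlt b A (by linarith [hFpos a])
  have hAB : A < B := hlt A B (by linarith [hFmono a b hab])
  set m := ∫ t in a..b, f t with hmdef
  have hm : 0 < m := intervalIntegral.intervalIntegral_pos_of_pos (hfint a b) hf_pos hab
  have hmass : (∫ t in A..B, f t) = m := by
    have h1 := hFdiff A B
    have h2 := hFdiff a b
    rw [hmdef]
    linarith
  have hupper : (∫ t in a..b, t * f t) ≤ b * m := by
    have h1 : (∫ t in a..b, t * f t) ≤ ∫ t in a..b, b * f t := by
      refine intervalIntegral.integral_mono_on hab.le (hgint a b)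
        ((continuous_const.mul hf_cont).intervalIntegrable a b) ?_
      intro t ht
      exact mul_le_mul_of_nonneg_right ht.2 (hf_pos t).le
    rwa [intervalIntegral.integral_const_mul] at h1
  have hlower : A * m ≤ ∫ t in A..B, t * f t := by
    have h1 : (∫ t in A..B, A * f t) ≤ ∫ t in A..B, t * f t := by
      refine intervalIntegral.integral_mono_on hAB.le
        ((continuous_const.mul hf_cont).intervalIntegrable A B) (hgint A B) ?_
      intro t ht
      exact mul_le_mul_of_nonneg_right ht.1 (hf_pos t).le
    rwa [intervalIntegral.integral_const_mul, hmass] at h1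
  have h1 : (∫ t in a..b, t * f t) + ∫ t in b..A, t * f t = ∫ t in a..A, t * f t :=
    intervalIntegral.integral_add_adjacent_intervals (hgint a b) (hgint b A)
  have h2 : (∫ t in b..A, t * f t) + ∫ t in A..B, t * f t = ∫ t in b..B, t * f t :=
    intervalIntegral.integral_add_adjacent_intervals (hgint b A) (hgint A B)
  have hbm : b * m < A * m := mul_lt_mul_of_pos_right hbA hm
  simp only []
  rw [← hAdef, ← hBdef]
  linarith
end

section
/- Let f be a continuous strictly positive probability density on ℝ with CDF F, and let c₂(c₁) = F⁻¹(F(c₁) + 1 − α). For c₁ < c₁' in the domain {F(c₁) < α} with c₁' < c₂(c₁): ∫_{c₂(c₁)}^{c₂(c₁')} t f(t) dt − ∫_{c₁}^{c₁'} t f(t) dt > c₂(c₁)·∫_{c₂(c₁)}^{c₂(c₁')} f(t)dt − c₁'·∫_{c₁}^{c₁'} f(t)dt = (c₂(c₁) − c₁')·∫_{c₁}^{c₁'} f(t)dt > 0. -/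
/-!
Since `F (c2 c) = F c + 1 - α`, the map `c2` moves the mass `∫_{c1}^{c1'} f` to the interval
`[c2 c1, c2 c1']` unchanged. Against a positive density, `t` averages strictly above the left
endpoint and strictly below the right endpoint of an interval, which gives the strict inequality.
-/

open MeasureTheory Set

section WeightedMean

variable {f : ℝ → ℝ} {a b : ℝ}

theorem mul_intervalIntegral_lt_intervalIntegral_id_mul (hf : IntervalIntegrable f volume a b)
    (hpos : ∀ t ∈ Ioo a b, 0 < f t) (hab : a < b) :
    a * ∫ t in a..b, f t < ∫ t in a..b, t * f t := by
  have hdiff : 0 < ∫ t in a..b, (t - a) * f t :=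
    intervalIntegral.intervalIntegral_pos_of_pos_on (hf.continuousOn_mul (by fun_prop))
      (fun t ht => mul_pos (sub_pos.2 ht.1) (hpos t ht)) hab
  simp only [sub_mul] at hdiff
  rw [intervalIntegral.integral_sub (hf.continuousOn_mul (by fun_prop)) (hf.const_mul a),
    intervalIntegral.integral_const_mul] at hdiff
  linarith

theorem intervalIntegral_id_mul_lt_mul_intervalIntegral (hf : IntervalIntegrable f volume a b)
    (hpos : ∀ t ∈ Ioo a b, 0 < f t) (hab : a < b) :
    ∫ t in a..b, t * f t < b * ∫ t in a..b, f t := by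
  have hdiff : 0 < ∫ t in a..b, (b - t) * f t :=
    intervalIntegral.intervalIntegral_pos_of_pos_on (hf.continuousOn_mul (by fun_prop))
      (fun t ht => mul_pos (sub_pos.2 ht.2) (hpos t ht)) hab
  simp only [sub_mul] at hdiff
  rw [intervalIntegral.integral_sub (hf.const_mul b) (hf.continuousOn_mul (by fun_prop)),
    intervalIntegral.integral_const_mul] at hdiff
  linarith

end WeightedMean

theorem strictMono_integral_Iic {f : ℝ → ℝ} (hf : Integrable f) (hpos : ∀ t, 0 < f t) :
    StrictMono fun x => ∫ t in Iic x, f t := fun a b hab => by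
  have h := intervalIntegral.intervalIntegral_pos_of_pos hf.intervalIntegrable hpos hab
  rw [← intervalIntegral.integral_Iic_sub_Iic hf.integrableOn hf.integrableOn] at h
  exact sub_pos.1 h

theorem stmt_18_general (f : ℝ → ℝ) (hf_pos : ∀ t, 0 < f t)
    (hf_density : (∫ t, f t) = 1)
    (F Finv : ℝ → ℝ) (hF : ∀ x, F x = ∫ t in Set.Iic x, f t)
    (hFinv_right : ∀ y, 0 < y → y < 1 → F (Finv y) = y)
    (α : ℝ) (hα : α < 1 / 2)
    (c2 : ℝ → ℝ) (hc2 : ∀ c1, c2 c1 = Finv (F c1 + 1 - α))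
    (c1 c1' : ℝ) (hlt : c1 < c1') (hdom : F c1 < α) (hdom' : F c1' < α)
    (hmid : c1' < c2 c1) :
    ((∫ t in (c2 c1)..(c2 c1'), t * f t) - ∫ t in c1..c1', t * f t >
        c2 c1 * (∫ t in (c2 c1)..(c2 c1'), f t) - c1' * ∫ t in c1..c1', f t) ∧
    (c2 c1 * (∫ t in (c2 c1)..(c2 c1'), f t) - c1' * (∫ t in c1..c1', f t)
        = (c2 c1 - c1') * ∫ t in c1..c1', f t) ∧
    0 < (c2 c1 - c1') * ∫ t in c1..c1', f t := by
  have hf : Integrable f := .of_integral_ne_zero (by simp [hf_density])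
  have hF_sub (a b : ℝ) : F b - F a = ∫ t in a..b, f t := by
    rw [hF, hF]
    exact intervalIntegral.integral_Iic_sub_Iic hf.integrableOn hf.integrableOn
  have hF_mono : StrictMono F := funext hF ▸ strictMono_integral_Iic hf hf_pos
  have hF_c2 (c : ℝ) (hc : F c < α) : F (c2 c) = F c + 1 - α := by
    have hF_nonneg : 0 ≤ F c :=
      hF c ▸ setIntegral_nonneg measurableSet_Iic fun t _ => (hf_pos t).le
    rw [hc2]
    exact hFinv_right _ (by linarith) (by linarith)
  have hc2_lt : c2 c1 < c2 c1' := hF_mono.lt_iff_lt.1 <| by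
    rw [hF_c2 c1 hdom, hF_c2 c1' hdom']
    linarith [hF_mono hlt]
  have hmass : (∫ t in (c2 c1)..(c2 c1'), f t) = ∫ t in c1..c1', f t := by
    rw [← hF_sub, ← hF_sub, hF_c2 c1 hdom, hF_c2 c1' hdom']
    ring
  have hupper := mul_intervalIntegral_lt_intervalIntegral_id_mul hf.intervalIntegrable
    (fun t _ => hf_pos t) hc2_lt
  have hlower := intervalIntegral_id_mul_lt_mul_intervalIntegral hf.intervalIntegrable
    (fun t _ => hf_pos t) hlt
  have hmass_pos : 0 < ∫ t in c1..c1', f t :=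
    intervalIntegral.intervalIntegral_pos_of_pos hf.intervalIntegrable hf_pos hlt
  refine ⟨by linarith, by rw [hmass]; ring, mul_pos (by linarith) hmass_pos⟩

theorem stmt_18 (f : ℝ → ℝ) (hf_cont : Continuous f) (hf_pos : ∀ t, 0 < f t)
    (hf_density : (∫ t, f t) = 1)
    (hf_moment : Integrable (fun t => t * f t))
    (F Finv : ℝ → ℝ) (hF : ∀ x, F x = ∫ t in Set.Iic x, f t)
    (hFinv_left : ∀ x, Finv (F x) = x)
    (hFinv_right : ∀ y, 0 < y → y < 1 → F (Finv y) = y)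
    (α : ℝ) (hα0 : 0 < α) (hα : α < 1 / 2)
    (c2 : ℝ → ℝ) (hc2 : ∀ c1, c2 c1 = Finv (F c1 + 1 - α))
    (c1 c1' : ℝ) (hlt : c1 < c1') (hdom : F c1 < α) (hdom' : F c1' < α)
    (hmid : c1' < c2 c1) :
    ((∫ t in (c2 c1)..(c2 c1'), t * f t) - ∫ t in c1..c1', t * f t >
        c2 c1 * (∫ t in (c2 c1)..(c2 c1'), f t) - c1' * ∫ t in c1..c1', f t) ∧
    (c2 c1 * (∫ t in (c2 c1)..(c2 c1'), f t) - c1' * (∫ t in c1..c1', f t)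
        = (c2 c1 - c1') * ∫ t in c1..c1', f t) ∧
    0 < (c2 c1 - c1') * ∫ t in c1..c1', f t :=
  stmt_18_general f hf_pos hf_density F Finv hF hFinv_right α hα c2 hc2 c1 c1' hlt hdom hdom' hmid
end
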